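/- arXiv:1805.04824 — 4 statements merged into one kernel-verified Lean document; each statement's English description precedes it below -/
import Mathlib

section
/- Let A, S(z) ∈ ℝ^{d×d}, V : ℝᵈ → ℝ differentiable, and let z : [0,T) → ℝᵈ be a differentiable solution of the DAE A ż = S(z) ∇V(z). Suppose ∇V(z(t)) ∈ Null(A)^⊥ for all t, and A†S(z(t)) is skew-symmetric for all t. Then (d/dt) V(z(t)) = 0 for all t ∈ [0,T). -/
open Matrix

lemma skew_quad {d : ℕ} (M : Matrix (Fin d) (Fin d) ℝ) (h : Mᵀ = -M)
    (x : Fin d → ℝ) : x ⬝ᵥ M.mulVec x = 0 := by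
  have h1 : x ⬝ᵥ M.mulVec x = Mᵀ.mulVec x ⬝ᵥ x := by
    rw [Matrix.dotProduct_mulVec, ← Matrix.mulVec_transpose]
  rw [h, Matrix.neg_mulVec, neg_dotProduct] at h1
  rw [dotProduct_comm] at h1
  have h2 : M.mulVec x ⬝ᵥ x = 0 := by linarith
  rw [dotProduct_comm]; exact h2

/-- Conservation law for a proper function along a linear gradient DAE
`A ż = S(z) ∇V(z)` with `A†S(z(t))` skew-symmetric. -/
theorem stmt5 {d : ℕ} (A Ad : Matrix (Fin d) (Fin d) ℝ)
    (hA1 : A * Ad * A = A) (hA2 : Ad * A * Ad = Ad)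
    (hA3 : (Ad * A)ᵀ = Ad * A) (hA4 : (A * Ad)ᵀ = A * Ad)
    (S : (Fin d → ℝ) → Matrix (Fin d) (Fin d) ℝ)
    (V : (Fin d → ℝ) → ℝ) (hV : Differentiable ℝ V)
    (gV : (Fin d → ℝ) → (Fin d → ℝ))
    (hgV : ∀ x w, fderiv ℝ V x w = gV x ⬝ᵥ w)
    (T : ℝ) (z zd : ℝ → (Fin d → ℝ))
    (hz : ∀ t ∈ Set.Ico (0:ℝ) T, HasDerivAt z (zd t) t)
    (hdae : ∀ t ∈ Set.Ico (0:ℝ) T,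
      A.mulVec (zd t) = (S (z t)).mulVec (gV (z t)))
    (hproper : ∀ t ∈ Set.Ico (0:ℝ) T,
      ∀ e : Fin d → ℝ, A.mulVec e = 0 → gV (z t) ⬝ᵥ e = 0)
    (hskew : ∀ t ∈ Set.Ico (0:ℝ) T, (Ad * S (z t))ᵀ = -(Ad * S (z t))) :
    ∀ t ∈ Set.Ico (0:ℝ) T, deriv (fun s => V (z s)) t = 0 := by
  intro t ht
  have hderiv : HasDerivAt (fun s => V (z s)) (fderiv ℝ V (z t) (zd t)) t :=
    (hV (z t)).hasFDerivAt.comp_hasDerivAt t (hz t ht)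
  rw [hderiv.deriv, hgV]
  -- decompose zd t
  set v := zd t with hv
  have hker : A.mulVec (v - (Ad * A).mulVec v) = 0 := by
    have : A.mulVec ((Ad * A).mulVec v) = A.mulVec v := by
      rw [Matrix.mulVec_mulVec, ← Matrix.mul_assoc, hA1]
    rw [Matrix.mulVec_sub, this, sub_self]
  have h1 : gV (z t) ⬝ᵥ (v - (Ad * A).mulVec v) = 0 := hproper t ht _ hker
  have h2 : gV (z t) ⬝ᵥ v = gV (z t) ⬝ᵥ (Ad * A).mulVec v := by
    rw [dotProduct_sub] at h1; linarith
  rw [h2, ← Matrix.mulVec_mulVec, hdae t ht, Matrix.mulVec_mulVec]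
  exact skew_quad _ (hskew t ht) _
end

section
/- Let A ∈ ℝ^{d×d}, f : ℝᵈ → ℝᵈ continuously differentiable, V : ℝᵈ → ℝ twice continuously differentiable with ∇V(z) ∈ Null(A)^⊥ and ⟨∇V(z), A†f(z)⟩ = 0 for all z in a set M ⊆ ℝᵈ. Define, for z with ∇V(z) ≠ 0, S(z) = (f(z)(∇V(z))ᵀ - A∇V(z)(A†f(z))ᵀ)/‖∇V(z)‖². Then S(z)∇V(z) = f(z) and A†S(z) is skew-symmetric for every z ∈ M with ∇V(z) ≠ 0. -/
open Matrix

lemma vmv_mulVec {d : ℕ} (a b v : Fin d → ℝ) :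
    (vecMulVec a b).mulVec v = (b ⬝ᵥ v) • a := by
  ext i
  simp [vecMulVec, mulVec, dotProduct, Finset.mul_sum, mul_comm, mul_left_comm, mul_assoc]

lemma mul_vmv {d : ℕ} (M : Matrix (Fin d) (Fin d) ℝ) (a b : Fin d → ℝ) :
    M * vecMulVec a b = vecMulVec (M.mulVec a) b := by
  ext i j
  simp [vecMulVec, mul_apply, mulVec, dotProduct, Finset.sum_mul, mul_assoc]

lemma vmv_transpose {d : ℕ} (a b : Fin d → ℝ) :
    (vecMulVec a b)ᵀ = vecMulVec b a := by
  ext i j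
  simp [vecMulVec, transpose_apply, mul_comm]

/-- Existence of a linear gradient structure for a conservative DAE: the
explicit matrix `S(z)` satisfies `S(z)∇V(z) = f(z)` and `A†S(z)` is
skew-symmetric on `M`, wherever `∇V(z) ≠ 0`. -/
theorem stmt7 {d : ℕ} (A Ad : Matrix (Fin d) (Fin d) ℝ)
    (hA1 : A * Ad * A = A) (hA2 : Ad * A * Ad = Ad)
    (hA3 : (Ad * A)ᵀ = Ad * A) (hA4 : (A * Ad)ᵀ = A * Ad)
    (f : (Fin d → ℝ) → (Fin d → ℝ)) (hf : ContDiff ℝ 1 f)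
    (V : (Fin d → ℝ) → ℝ) (hV : ContDiff ℝ 2 V)
    (gV : (Fin d → ℝ) → (Fin d → ℝ))
    (hgV : ∀ x w, fderiv ℝ V x w = gV x ⬝ᵥ w)
    (M : Set (Fin d → ℝ))
    (hproper : ∀ z ∈ M, ∀ e : Fin d → ℝ, A.mulVec e = 0 → gV z ⬝ᵥ e = 0)
    (hcons : ∀ z ∈ M, gV z ⬝ᵥ Ad.mulVec (f z) = 0)
    (S : (Fin d → ℝ) → Matrix (Fin d) (Fin d) ℝ)
    (hSdef : ∀ z : Fin d → ℝ, gV z ≠ 0 →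
      S z = (gV z ⬝ᵥ gV z)⁻¹ •
        (vecMulVec (f z) (gV z) - vecMulVec (A.mulVec (gV z)) (Ad.mulVec (f z)))) :
    ∀ z ∈ M, gV z ≠ 0 →
      (S z).mulVec (gV z) = f z ∧ (Ad * S z)ᵀ = -(Ad * S z) := by
  intro z hz hne
  set g := gV z with hg
  have hgg : g ⬝ᵥ g ≠ 0 := fun h => hne (dotProduct_self_eq_zero.mp h)
  -- projection fact : (Ad * A).mulVec g = g
  set e := g - (Ad * A).mulVec g with he
  have hAe : A.mulVec e = 0 := by
    have h : A.mulVec ((Ad * A).mulVec g) = A.mulVec g := by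
      rw [mulVec_mulVec, ← mul_assoc, hA1]
    simp [he, mulVec_sub, h]
  have h1 : g ⬝ᵥ e = 0 := hproper z hz e hAe
  have hAdAe : (Ad * A).mulVec e = 0 := by
    have h : (Ad * A).mulVec ((Ad * A).mulVec g) = (Ad * A).mulVec g := by
      have hid : Ad * A * (Ad * A) = Ad * A := by
        rw [mul_assoc, ← mul_assoc A Ad A, hA1]
      rw [mulVec_mulVec, hid]
    simp [he, mulVec_sub, h]
  have h2 : ((Ad * A).mulVec g) ⬝ᵥ e = 0 := by
    calc ((Ad * A).mulVec g) ⬝ᵥ e = e ⬝ᵥ ((Ad * A).mulVec g) := dotProduct_comm _ _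
      _ = ((Ad * A)ᵀ.mulVec e) ⬝ᵥ g := by rw [dotProduct_mulVec, ← mulVec_transpose]
      _ = ((Ad * A).mulVec e) ⬝ᵥ g := by rw [hA3]
      _ = 0 := by rw [hAdAe, zero_dotProduct]
  have hee : e ⬝ᵥ e = 0 := by
    have h : e ⬝ᵥ e = g ⬝ᵥ e - ((Ad * A).mulVec g) ⬝ᵥ e := by
      rw [he, sub_dotProduct]
    rw [h, h1, h2, sub_zero]
  have hproj : (Ad * A).mulVec g = g := by
    have h0 := dotProduct_self_eq_zero.mp hee
    rw [he, sub_eq_zero] at h0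
    exact h0.symm
  -- conservation with dot product flipped
  have hcz : Ad.mulVec (f z) ⬝ᵥ g = 0 := by
    rw [dotProduct_comm]; exact hcons z hz
  rw [hSdef z hne, ← hg]
  constructor
  · rw [smul_mulVec, sub_mulVec, vmv_mulVec, vmv_mulVec, hcz, zero_smul, sub_zero,
      smul_smul, inv_mul_cancel₀ hgg, one_smul]
  · have hAdAg : Ad.mulVec (A.mulVec g) = g := by rw [mulVec_mulVec, hproj]
    rw [mul_smul_comm, mul_sub, mul_vmv, mul_vmv, hAdAg]
    rw [transpose_smul, transpose_sub, vmv_transpose, vmv_transpose]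
    rw [← smul_neg, neg_sub]
end

section
/- Suppose z⁽ᵐ⁾, z⁽ᵐ⁺¹⁾ ∈ ℝᵈ satisfy A(z⁽ᵐ⁺¹⁾ - z⁽ᵐ⁾)/Δt = S̄ ∇̄V + Σᵢ cᵢ bᵢ, where ∇̄V ∈ ℝᵈ satisfies ⟨∇̄V, z⁽ᵐ⁺¹⁾ - z⁽ᵐ⁾⟩ = V(z⁽ᵐ⁺¹⁾) - V(z⁽ᵐ⁾) and ∇̄V ∈ Null(A)^⊥, each bᵢ ∈ Range(A)^⊥, and A†S̄ is skew-symmetric. Then V(z⁽ᵐ⁺¹⁾) = V(z⁽ᵐ⁾). -/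
open Matrix

/-- Discrete conservation law for the reformulated discrete gradient scheme
`A(z⁽ᵐ⁺¹⁾ - z⁽ᵐ⁾)/Δt = S̄ ∇̄V + Σᵢ cᵢ bᵢ` with proper discrete gradient and
skew-symmetric `A†S̄`. -/
theorem stmt15 {d ℓ : ℕ} (A Ad : Matrix (Fin d) (Fin d) ℝ)
    (hA1 : A * Ad * A = A) (hA2 : Ad * A * Ad = Ad)
    (hA3 : (Ad * A)ᵀ = Ad * A) (hA4 : (A * Ad)ᵀ = A * Ad)
    (S : Matrix (Fin d) (Fin d) ℝ)
    (V : (Fin d → ℝ) → ℝ)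
    (DGv : Fin d → ℝ) (c : Fin ℓ → ℝ) (b : Fin ℓ → (Fin d → ℝ))
    (hb : ∀ i, ∀ x : Fin d → ℝ, b i ⬝ᵥ A.mulVec x = 0)
    (Δt : ℝ) (hΔt : 0 < Δt) (zm zm1 : Fin d → ℝ)
    (hscheme : Δt⁻¹ • A.mulVec (zm1 - zm) = S.mulVec DGv + ∑ i, c i • b i)
    (hDG : DGv ⬝ᵥ (zm1 - zm) = V zm1 - V zm)
    (hproper : ∀ e : Fin d → ℝ, A.mulVec e = 0 → DGv ⬝ᵥ e = 0)
    (hskew : (Ad * S)ᵀ = -(Ad * S)) :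
    V zm1 = V zm := by
  set w := zm1 - zm with hwdef
  have hw : A.mulVec w = Δt • (S.mulVec DGv + ∑ i, c i • b i) := by
    rw [← hscheme, smul_smul, mul_inv_cancel₀ hΔt.ne', one_smul]
  -- Aᵀ bᵢ = 0
  have hAtb : ∀ i, Aᵀ.mulVec (b i) = 0 := by
    intro i
    funext j
    have := hb i (Pi.single j 1)
    simp only [Matrix.mulVec_single, mul_one] at this
    simpa [Matrix.mulVec, dotProduct, Matrix.transpose_apply, mul_comm] using this
  -- Ad bᵢ = 0
  have hAd_eq : Ad = Ad * Adᵀ * Aᵀ := by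
    calc Ad = Ad * (A * Ad) := by rw [← mul_assoc, hA2]
    _ = Ad * (A * Ad)ᵀ := by rw [hA4]
    _ = Ad * Adᵀ * Aᵀ := by rw [Matrix.transpose_mul, mul_assoc]
  have hAdb : ∀ i, Ad.mulVec (b i) = 0 := by
    intro i
    rw [hAd_eq, ← Matrix.mulVec_mulVec, hAtb i, Matrix.mulVec_zero]
  -- A (w - Ad A w) = 0
  have he : A.mulVec (w - (Ad * A).mulVec w) = 0 := by
    rw [Matrix.mulVec_sub, Matrix.mulVec_mulVec, ← mul_assoc, hA1, sub_self]
  have hDGe : DGv ⬝ᵥ (w - (Ad * A).mulVec w) = 0 := hproper _ he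
  -- Ad A w = Δt • (Ad S) DGv
  have hAdAw : (Ad * A).mulVec w = Δt • (Ad * S).mulVec DGv := by
    rw [← Matrix.mulVec_mulVec, hw, Matrix.mulVec_smul, Matrix.mulVec_add,
      Matrix.mulVec_mulVec]
    have h0 : Ad *ᵥ (∑ i, c i • b i) = 0 := by
      have : Ad.mulVecLin (∑ i, c i • b i) = 0 := by
        rw [map_sum]
        refine Finset.sum_eq_zero fun i _ => ?_
        rw [_root_.map_smul]
        simp [Matrix.mulVecLin_apply, hAdb i]
      rw [← Matrix.mulVecLin_apply]; exact this
    rw [h0, add_zero]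
  -- skew-symmetry gives DGv ⬝ᵥ (Ad S) DGv = 0
  have hsk : DGv ⬝ᵥ (Ad * S).mulVec DGv = 0 := by
    have h1 : DGv ⬝ᵥ (Ad * S) *ᵥ DGv = -(DGv ⬝ᵥ (Ad * S) *ᵥ DGv) := by
      conv_lhs => rw [Matrix.dotProduct_mulVec, ← Matrix.mulVec_transpose, hskew,
        Matrix.neg_mulVec, neg_dotProduct, dotProduct_comm]
    linarith
  have key : DGv ⬝ᵥ w = 0 := by
    have : DGv ⬝ᵥ w = DGv ⬝ᵥ ((Ad * A).mulVec w) + DGv ⬝ᵥ (w - (Ad * A).mulVec w) := by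
      rw [← dotProduct_add]
      congr 1
      abel
    rw [this, hDGe, hAdAw, dotProduct_smul, hsk, smul_zero, add_zero]
  rw [hwdef] at key
  rw [key] at hDG
  linarith
end

section
/- Let γ ∈ ℝᵈ with γ ∈ Null(A)^⊥, and suppose ⟨γ, A†f(z)⟩ = 0 for all z ∈ M, where M ⊆ ℝᵈ. If z⁽ᵐ⁾, z⁽ᵐ⁺¹⁾ satisfy the implicit Euler scheme A(z⁽ᵐ⁺¹⁾ - z⁽ᵐ⁾)/Δt = f(z⁽ᵐ⁺¹⁾) with z⁽ᵐ⁺¹⁾ ∈ M and f(z⁽ᵐ⁺¹⁾) ∈ Range(A), then ⟨γ, z⁽ᵐ⁺¹⁾⟩ = ⟨γ, z⁽ᵐ⁾⟩. -/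
open Matrix

/-- Conservation of a linear conserved quantity `V(z) = ⟨γ, z⟩` with
`γ ∈ Null(A)^⊥` by the implicit Euler method for index-1 DAEs. -/
theorem stmt16 {d : ℕ} (A Ad : Matrix (Fin d) (Fin d) ℝ)
    (hA1 : A * Ad * A = A) (hA2 : Ad * A * Ad = Ad)
    (hA3 : (Ad * A)ᵀ = Ad * A) (hA4 : (A * Ad)ᵀ = A * Ad)
    (f : (Fin d → ℝ) → (Fin d → ℝ)) (M : Set (Fin d → ℝ))
    (γ : Fin d → ℝ)
    (hγ : ∀ e : Fin d → ℝ, A.mulVec e = 0 → γ ⬝ᵥ e = 0)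
    (hcons : ∀ z ∈ M, γ ⬝ᵥ Ad.mulVec (f z) = 0)
    (Δt : ℝ) (hΔt : 0 < Δt) (zm zm1 : Fin d → ℝ)
    (hscheme : Δt⁻¹ • A.mulVec (zm1 - zm) = f zm1)
    (hmem : zm1 ∈ M) (hrange : ∃ x, A.mulVec x = f zm1) :
    γ ⬝ᵥ zm1 = γ ⬝ᵥ zm := by
  set w := zm1 - zm with hw
  have hAw : A.mulVec w = Δt • f zm1 := by
    rw [← hscheme, smul_smul, mul_inv_cancel₀ hΔt.ne', one_smul]
  -- the null-space component
  have hnull : A.mulVec (w - Ad.mulVec (A.mulVec w)) = 0 := by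
    have : A.mulVec (Ad.mulVec (A.mulVec w)) = A.mulVec w := by
      rw [Matrix.mulVec_mulVec, Matrix.mulVec_mulVec, hA1]
    rw [Matrix.mulVec_sub, this, sub_self]
  have h1 : γ ⬝ᵥ (w - Ad.mulVec (A.mulVec w)) = 0 := hγ _ hnull
  have h2 : γ ⬝ᵥ Ad.mulVec (A.mulVec w) = 0 := by
    rw [hAw, Matrix.mulVec_smul, dotProduct_smul, hcons zm1 hmem, smul_zero]
  have h3 : γ ⬝ᵥ w = 0 := by
    have := congrArg₂ (· + ·) h1 h2
    simpa [dotProduct_sub] using this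
  have : γ ⬝ᵥ zm1 - γ ⬝ᵥ zm = 0 := by
    rw [← dotProduct_sub]; exact h3
  linarith
end
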